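/- Let A be a real d×d Hurwitz matrix (all eigenvalues of A have strictly negative real part) and ω ∈ ℝ. Then A Ŝ_A(ω) A = −(1/π) A − ω² Ŝ_A(ω). -/

import Mathlib

open MeasureTheory
open scoped Matrix

/-- The matrix-valued cosine transform `Ŝ_A(ω) = (1/π)∫₀^∞ e^{tA} cos ωt dt`,
defined entrywise. -/
noncomputable def cosTransform {d : ℕ} (A : Matrix (Fin d) (Fin d) ℝ) (ω : ℝ) :
    Matrix (Fin d) (Fin d) ℝ :=
  Matrix.of fun i j => (1 / Real.pi) * ∫ t in Set.Ioi (0 : ℝ),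
    Real.cos (ω * t) * (NormedSpace.exp (t • A)) i j

/-!
On a generalized eigenvector of eigenvalue `μ` the exponential series of `t • B` is `e^{tμ}`
times a polynomial in `t`, so a Hurwitz matrix satisfies `‖e^{tA}‖ = O(e^{-εt})`. With
`F = ∫₀^∞ cos(ωt) e^{tA} dt`, the function `g(t) = (cos(ωt) A + ω sin(ωt)) e^{tA}` has derivative
`cos(ωt) (A² + ω²) e^{tA}` and vanishes at infinity, so `(A² + ω²) F = -g(0) = -A`. Since `A`
commutes with `F`, `A F A = A² F = -A - ω² F`, which is the claim after dividing by `π`.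
-/

open NormedSpace Filter Asymptotics Set Topology
open scoped Nat

variable {n : Type*} [Fintype n] [DecidableEq n]

/-- The `L∞` operator norm with its uniformity replaced by the product uniformity of `Matrix`.
With `Matrix.linftyOpNormedRing` itself, the derived topology is only defeq, not reducibly equal,
to that of `Matrix`: `ContinuousENorm` (hence Bochner integrals) is not found, and the general
lemmas on `NormedSpace.exp` cannot rewrite. -/
noncomputable abbrev Matrix.linftyOpNormedRing' (α : Type*) [NormedRing α] :
    NormedRing (Matrix n n α) :=
  { (Matrix.linftyOpNormedRing : NormedRing (Matrix n n α)) with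
    toPseudoMetricSpace :=
      (Matrix.linftyOpNormedRing : NormedRing (Matrix n n α)).toPseudoMetricSpace.replaceUniformity
        rfl }

noncomputable abbrev Matrix.linftyOpNormedAlgebra' (R α : Type*) [NormedField R] [NormedRing α]
    [NormedAlgebra R α] :
    @NormedAlgebra R (Matrix n n α) _ (Matrix.linftyOpNormedRing' α).toSeminormedRing :=
  letI : NormedRing (Matrix n n α) := Matrix.linftyOpNormedRing
  { Matrix.instAlgebra with
    norm_smul_le := Matrix.linftyOpNormedAlgebra.norm_smul_le }

attribute [local instance] Matrix.linftyOpNormedRing' Matrix.linftyOpNormedAlgebra'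

theorem Matrix.exp_mulVec_of_pow_mulVec_eq_zero {𝕂 : Type*} [RCLike 𝕂] {N : Matrix n n 𝕂}
    {k : ℕ} {x : n → 𝕂} (hx : N ^ k *ᵥ x = 0) :
    exp N *ᵥ x = ∑ m ∈ Finset.range k, (m ! : 𝕂)⁻¹ • (N ^ m *ᵥ x) := by
  have hterm : ∀ m ∉ Finset.range k, (m ! : 𝕂)⁻¹ • (N ^ m *ᵥ x) = 0 := by
    intro m hm
    rw [← Nat.sub_add_cancel (not_lt.mp (Finset.mem_range.not.mp hm)), pow_add,
      ← Matrix.mulVec_mulVec, hx, Matrix.mulVec_zero, smul_zero]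
  refine ((exp_series_hasSum_exp' (𝕂 := 𝕂) N).map (Matrix.mulVec.addMonoidHomLeft x)
    (continuous_id.matrix_mulVec continuous_const)).unique ?_
  convert hasSum_sum_of_ne_finset_zero (L := SummationFilter.unconditional ℕ) hterm using 2 with m
  simp [Matrix.mulVec.addMonoidHomLeft, Matrix.smul_mulVec]

theorem Matrix.exp_smul_mulVec_of_genEigenvector (B : Matrix n n ℂ) {μ : ℂ} {k : ℕ}
    {x : n → ℂ} (hx : (B - μ • 1) ^ k *ᵥ x = 0) (t : ℝ) :
    exp (t • B) *ᵥ x = ∑ m ∈ Finset.range k,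
      (Complex.exp (t * μ) * t ^ m / m !) • ((B - μ • 1) ^ m *ᵥ x) := by
  set N := B - μ • 1
  have hsplit : t • B = algebraMap ℂ _ (t * μ) + (t : ℂ) • N := by
    simp only [N, Algebra.algebraMap_eq_smul_one, smul_sub, smul_smul, Complex.coe_smul]
    abel
  have htN : ((t : ℂ) • N) ^ k *ᵥ x = 0 := by
    rw [smul_pow, Matrix.smul_mulVec, hx, smul_zero]
  rw [hsplit, Matrix.exp_add_of_commute _ _ (Algebra.commute_algebraMap_left _ _),
    ← algebraMap_exp_comm, ← Matrix.mulVec_mulVec, Matrix.exp_mulVec_of_pow_mulVec_eq_zero htN,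
    Algebra.algebraMap_eq_smul_one, Matrix.smul_mulVec, Matrix.one_mulVec, Finset.smul_sum,
    ← Complex.exp_eq_exp_ℂ]
  refine Finset.sum_congr rfl fun m _ => ?_
  rw [smul_pow, Matrix.smul_mulVec, smul_smul, smul_smul]
  congr 1
  field_simp

theorem isBigO_cexp_mul_pow {μ : ℂ} {b : ℝ} (hμ : μ.re < b) (m : ℕ) :
    (fun t : ℝ => Complex.exp (t * μ) * t ^ m) =O[atTop] fun t => Real.exp (b * t) := by
  have hexp : (fun t : ℝ => Complex.exp (t * μ)) =O[atTop] fun t => Real.exp (μ.re * t) :=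
    isBigO_of_le _ fun t => by simp [Complex.norm_exp, mul_comm]
  have hpow : (fun t : ℝ => (t : ℂ) ^ m) =O[atTop] fun t => Real.exp ((b - μ.re) * t) :=
    (isBigO_of_le (f := fun t : ℝ => (t : ℂ) ^ m) (g := fun t : ℝ => t ^ m) atTop
      fun t => by simp).trans (isLittleO_pow_exp_pos_mul_atTop m (sub_pos.2 hμ)).isBigO
  refine (hexp.mul hpow).congr_right fun t => ?_
  rw [← Real.exp_add]
  ring_nf

theorem Matrix.isBigO_exp_smul_mulVec_of_genEigenvector (B : Matrix n n ℂ) {μ : ℂ} {k : ℕ}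
    {x : n → ℂ} (hx : (B - μ • 1) ^ k *ᵥ x = 0) {b : ℝ} (hμ : μ.re < b) :
    (fun t : ℝ => exp (t • B) *ᵥ x) =O[atTop] fun t => Real.exp (b * t) := by
  simp_rw [Matrix.exp_smul_mulVec_of_genEigenvector B hx]
  refine IsBigO.fun_sum fun m _ => ?_
  have hcoeff := (isBigO_cexp_mul_pow hμ m).const_mul_left (m ! : ℂ)⁻¹
  refine (isBigO_of_le' (c := ‖(B - μ • 1) ^ m *ᵥ x‖) _ fun t => ?_).trans hcoeff
  rw [norm_smul, mul_comm, div_eq_inv_mul]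

theorem Matrix.isBigO_exp_smul_mulVec (B : Matrix n n ℂ) {b : ℝ}
    (hB : ∀ μ ∈ spectrum ℂ B, μ.re < b) (x : n → ℂ) :
    (fun t : ℝ => exp (t • B) *ᵥ x) =O[atTop] fun t => Real.exp (b * t) := by
  have hx : x ∈ ⨆ μ, Module.End.maxGenEigenspace (Matrix.toLinAlgEquiv' B) μ := by
    rw [Module.End.iSup_maxGenEigenspace_eq_top]
    trivial
  refine Submodule.iSup_induction (motive := fun y =>
    (fun t : ℝ => exp (t • B) *ᵥ y) =O[atTop] fun t => Real.exp (b * t)) _ hx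
    (fun μ y hy => ?_) ?_ fun y z hy hz => ?_
  · obtain ⟨k, hk⟩ := (Module.End.mem_maxGenEigenspace _ _ _).mp hy
    rw [← map_one (Matrix.toLinAlgEquiv' (R := ℂ) (n := n)), ← map_smul, ← map_sub, ← map_pow,
      Matrix.toLinAlgEquiv'_apply] at hk
    rcases eq_or_ne y 0 with rfl | hy0
    · simp only [Matrix.mulVec_zero]
      exact isBigO_zero _ _
    have hμ : μ ∈ spectrum ℂ B := by
      rw [← AlgEquiv.spectrum_eq Matrix.toLinAlgEquiv' B]
      exact (Module.End.HasUnifEigenvalue.lt zero_lt_one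
        ((Submodule.ne_bot_iff _).mpr ⟨y, hy, hy0⟩)).mem_spectrum
    exact Matrix.isBigO_exp_smul_mulVec_of_genEigenvector B hk (hB μ hμ)
  · simp only [Matrix.mulVec_zero]
    exact isBigO_zero _ _
  · simpa only [Matrix.mulVec_add] using hy.add hz

theorem Matrix.isBigO_of_forall_isBigO_apply {α 𝕜 : Type*} [NormedField 𝕜] {l : Filter α}
    {f : α → Matrix n n 𝕜} {g : α → ℝ} (h : ∀ i j, (fun x => f x i j) =O[l] g) : f =O[l] g := by
  have hsum : f = fun x => ∑ i, ∑ j, f x i j • Matrix.single i j (1 : 𝕜) := by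
    ext x : 1
    conv_lhs => rw [Matrix.matrix_eq_sum_single (f x)]
    simp [Matrix.smul_single]
  rw [hsum]
  refine IsBigO.fun_sum fun i _ => IsBigO.fun_sum fun j _ => ?_
  exact (isBigO_of_le' (c := ‖Matrix.single i j (1 : 𝕜)‖) l
    fun x => (norm_smul_le _ _).trans_eq (mul_comm _ _)).trans (h i j)

theorem Matrix.exp_map_ofReal (A : Matrix n n ℝ) :
    (exp A).map Complex.ofReal = exp (A.map Complex.ofReal) :=
  map_exp (algebraMap ℝ ℂ).mapMatrix (continuous_id.matrix_map Complex.continuous_ofReal) A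

theorem Matrix.isBigO_exp_smul (A : Matrix n n ℝ) {b : ℝ}
    (hA : ∀ μ ∈ spectrum ℂ (A.map Complex.ofReal), μ.re < b) :
    (fun t : ℝ => exp (t • A)) =O[atTop] fun t => Real.exp (b * t) := by
  refine Matrix.isBigO_of_forall_isBigO_apply fun i j => ?_
  refine (isBigO_of_le' (c := 1) _ fun t => ?_).trans
    (Matrix.isBigO_exp_smul_mulVec _ hA (Pi.single j 1))
  have hentry : ((exp (t • A) i j : ℝ) : ℂ)
      = (exp (t • A.map Complex.ofReal) *ᵥ Pi.single j 1) i := by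
    have hmap : (exp (t • A)).map Complex.ofReal = exp (t • A.map Complex.ofReal) := by
      rw [Matrix.exp_map_ofReal]
      congr 1
      ext
      simp
    rw [Matrix.mulVec_single_one, ← hmap]
    rfl
  rw [one_mul, ← Complex.norm_real, hentry]
  exact norm_le_pi_norm _ i

theorem integrableOn_Ioi_of_isBigO_exp_neg {E : Type*} [NormedAddCommGroup E] {f : ℝ → E}
    {a b : ℝ} (hb : 0 < b) (hf : ContinuousOn f (Ici a))
    (ho : f =O[atTop] fun x => Real.exp (-b * x)) : IntegrableOn f (Ioi a) :=
  (integrable_norm_iff ((hf.mono Ioi_subset_Ici_self).aestronglyMeasurable measurableSet_Ioi)).1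
    (integrable_of_isBigO_exp_neg hb hf.norm ho.norm_left)

theorem Commute.integral_right {X 𝔸 : Type*} [MeasurableSpace X] {μ : Measure X}
    [NonUnitalNormedRing 𝔸] [NormedSpace ℝ 𝔸] [IsScalarTower ℝ 𝔸 𝔸] [SMulCommClass ℝ 𝔸 𝔸]
    {a : 𝔸} {f : X → 𝔸} (hf : Integrable f μ) (h : ∀ x, Commute a (f x)) :
    Commute a (∫ x, f x ∂μ) := by
  rw [Commute, SemiconjBy, ← integral_const_mul_of_integrable hf,
    ← integral_mul_const_of_integrable hf]
  exact congrArg _ (funext fun x => (h x).eq)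

theorem Matrix.integral_apply {X : Type*} [MeasurableSpace X] {μ : Measure X}
    {f : X → Matrix n n ℝ} (hf : Integrable f μ) (i j : n) :
    (∫ x, f x ∂μ) i j = ∫ x, f x i j ∂μ :=
  ((Matrix.entryLinearMap ℝ ℝ i j).toContinuousLinearMap.integral_comp_comm hf).symm

theorem hasDerivAt_cos_smul_add_sin_smul_mul_exp_smul (A : Matrix n n ℝ) (ω t : ℝ) :
    HasDerivAt (fun t => (Real.cos (ω * t) • A + (ω * Real.sin (ω * t)) • 1) * exp (t • A))
      ((A ^ 2 + ω ^ 2 • 1) * (Real.cos (ω * t) • exp (t • A))) t := by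
  have hcos := ((hasDerivAt_id t).const_mul ω).cos
  have hsin := (((hasDerivAt_id t).const_mul ω).sin).const_mul ω
  refine (((hcos.smul_const A).fun_add (hsin.smul_const 1)).fun_mul
    (hasDerivAt_exp_smul_const' A t)).congr_deriv ?_
  simp only [id, mul_one, add_mul, smul_mul_assoc, mul_smul_comm, one_mul, ← mul_assoc, sq]
  module

section CosineTransform

variable {A : Matrix n n ℝ} {ε : ℝ} (hε : 0 < ε)
  (hA : (fun t : ℝ => exp (t • A)) =O[atTop] fun t => Real.exp (-ε * t))
include hε hA

theorem integrableOn_cos_smul_exp_smul (ω : ℝ) :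
    IntegrableOn (fun t : ℝ => Real.cos (ω * t) • exp (t • A)) (Ioi 0) := by
  refine integrableOn_Ioi_of_isBigO_exp_neg hε (Continuous.continuousOn ?_)
    ((isBigO_of_le _ fun t => ?_).trans hA)
  · exact (Real.continuous_cos.comp (continuous_const_mul ω)).smul
      (exp_continuous.comp (continuous_id.smul continuous_const))
  · rw [norm_smul]
    exact mul_le_of_le_one_left (norm_nonneg _) (Real.abs_cos_le_one _)

theorem sq_add_smul_one_mul_integral_cos_smul_exp_smul (ω : ℝ) :
    (A ^ 2 + ω ^ 2 • 1) * ∫ t in Ioi 0, Real.cos (ω * t) • exp (t • A) = -A := by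
  have hbdd : (fun t => Real.cos (ω * t) • A + (ω * Real.sin (ω * t)) • 1) =O[atTop]
      fun _ => (1 : ℝ) := by
    refine isBigO_of_le' (c := ‖A‖ + |ω| * ‖(1 : Matrix n n ℝ)‖) _ fun t => ?_
    rw [Real.norm_eq_abs, abs_one, mul_one]
    refine (norm_add_le _ _).trans (add_le_add ?_ ?_) <;> rw [norm_smul, Real.norm_eq_abs]
    · exact mul_le_of_le_one_left (norm_nonneg _) (Real.abs_cos_le_one _)
    · rw [abs_mul]
      exact mul_le_mul_of_nonneg_right
        (mul_le_of_le_one_right (abs_nonneg _) (Real.abs_sin_le_one _)) (norm_nonneg _)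
  have hexp : Tendsto (fun t => Real.exp (-ε * t)) atTop (𝓝 0) :=
    Real.tendsto_exp_atBot.comp (tendsto_id.const_mul_atTop_of_neg (neg_lt_zero.2 hε))
  have hlim := (hbdd.mul hA).trans_tendsto (by simpa only [one_mul] using hexp)
  have hderiv := hasDerivAt_cos_smul_add_sin_smul_mul_exp_smul A ω
  have hint := integrableOn_cos_smul_exp_smul hε hA ω
  have hFTC := integral_Ioi_of_hasDerivAt_of_tendsto (hderiv 0).continuousAt.continuousWithinAt
    (fun t _ => hderiv t) (hint.const_mul (A ^ 2 + ω ^ 2 • 1)) hlim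
  rw [integral_const_mul_of_integrable hint] at hFTC
  simpa using hFTC

end CosineTransform

theorem exists_pos_forall_lt_neg {ι : Type*} {s : Set ι} (hs : s.Finite) {f : ι → ℝ}
    (hf : ∀ i ∈ s, f i < 0) : ∃ ε > 0, ∀ i ∈ s, f i < -ε :=
  ((eventually_mem_nhdsWithin (s := Ioi 0) (a := 0)).and <|
    hs.eventually_all.2 fun i hi => nhdsWithin_le_nhds <|
      (continuous_neg.tendsto' 0 0 neg_zero).eventually (eventually_gt_nhds (hf i hi))).exists

/-- For a Hurwitz matrix `A` and `ω ∈ ℝ`,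
`A Ŝ_A(ω) A = −(1/π) A − ω² Ŝ_A(ω)`. -/
theorem cosTransform_conj_by_A {d : ℕ}
    (A : Matrix (Fin d) (Fin d) ℝ) (ω : ℝ)
    (hA : ∀ μ ∈ spectrum ℂ (A.map Complex.ofReal), μ.re < 0) :
    A * cosTransform A ω * A
      = -((1 / Real.pi) • A) - (ω ^ 2) • cosTransform A ω := by
  obtain ⟨ε, hε, hspec⟩ := exists_pos_forall_lt_neg (Matrix.finite_spectrum _) hA
  have hdecay : (fun t : ℝ => exp (t • A)) =O[atTop] fun t => Real.exp (-ε * t) :=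
    A.isBigO_exp_smul hspec
  set F := ∫ t in Ioi 0, Real.cos (ω * t) • exp (t • A)
  have hint := integrableOn_cos_smul_exp_smul hε hdecay ω
  have hS : cosTransform A ω = (1 / Real.pi) • F := by
    ext i j
    simp [cosTransform, F, Matrix.integral_apply hint]
  have hcomm : Commute A F :=
    Commute.integral_right hint fun t => (((Commute.refl A).smul_right t).exp_right).smul_right _
  have hAFA : A * F * A = -A - ω ^ 2 • F := by
    rw [mul_assoc, ← hcomm.eq, ← mul_assoc, ← sq, eq_sub_iff_add_eq,
      ← sq_add_smul_one_mul_integral_cos_smul_exp_smul hε hdecay ω, add_mul, smul_one_mul]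
  rw [hS, mul_smul_comm, smul_mul_assoc, hAFA]
  module
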